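/- With a² = −2, b = 1 (i.e., a = i√2), the determinant of the 2k×2k matrix F_{2k} equals J(k+1)², the square of the (k+1)-st Jacobsthal number, for all k ≥ 1. -/
import Mathlib


/-- The Jacobsthal sequence: `J 0 = 0`, `J 1 = 1`, `J (n+2) = J (n+1) + 2 * J n`. -/
def jacobsthal : ℕ → ℕ
  | 0 => 0
  | 1 => 1
  | (n + 2) => jacobsthal (n + 1) + 2 * jacobsthal n

open Matrix


noncomputable def Tmat (x : ℂ) (n : ℕ) : Matrix (Fin n) (Fin n) ℂ := fun p q =>
  if (q : ℕ) = p + 1 then Complex.I * (Real.sqrt 2 : ℂ)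
  else if (p : ℕ) = q + 1 then -(Complex.I * (Real.sqrt 2 : ℂ))
  else if (p : ℕ) = q then x else 0

lemma Tmat_shift1 (x : ℂ) (n : ℕ) :
    (Tmat x (n + 2)).submatrix Fin.succ Fin.succ = Tmat x (n + 1) := by
  ext p q
  simp only [Tmat, submatrix_apply, Fin.val_succ]
  split_ifs <;> first | rfl | omega

lemma Tmat_shift2 (x : ℂ) (n : ℕ) :
    (Tmat x (n + 2)).submatrix (fun i : Fin n => i.succ.succ) (fun j : Fin n => j.succ.succ)
      = Tmat x n := by
  ext p q
  simp only [Tmat, submatrix_apply, Fin.val_succ]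
  split_ifs <;> first | rfl | omega

lemma Tmat_det_rec (x : ℂ) (n : ℕ) :
    (Tmat x (n + 2)).det = x * (Tmat x (n + 1)).det - 2 * (Tmat x n).det := by
  rw [Matrix.det_succ_row_zero, Fin.sum_univ_succ, Fin.sum_univ_succ]
  have e00 : Tmat x (n + 2) 0 0 = x := by simp [Tmat]
  have e01 : Tmat x (n + 2) 0 (0 : Fin (n+1)).succ = Complex.I * (Real.sqrt 2 : ℂ) := by
    simp [Tmat]
  have etail : ∀ j : Fin n, Tmat x (n + 2) 0 j.succ.succ = 0 := by
    intro j; simp [Tmat, Fin.val_succ]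
  rw [e00, e01]
  have htail : (∑ j : Fin n,
      (-1 : ℂ) ^ ((j.succ.succ : Fin (n+2)) : ℕ) * Tmat x (n+2) 0 j.succ.succ *
        ((Tmat x (n+2)).submatrix Fin.succ j.succ.succ.succAbove).det) = 0 := by
    apply Finset.sum_eq_zero
    intro j _
    rw [etail j]; ring
  rw [htail]
  -- first minor
  have hm0 : ((Tmat x (n+2)).submatrix Fin.succ (0 : Fin (n+2)).succAbove).det
      = (Tmat x (n+1)).det := by
    congr 1
    rw [show (0 : Fin (n+2)).succAbove = Fin.succ from funext fun i => Fin.zero_succAbove i]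
    exact Tmat_shift1 x n
  -- second minor
  have hm1 : ((Tmat x (n+2)).submatrix Fin.succ ((0 : Fin (n+1)).succ : Fin (n+2)).succAbove).det
      = -(Complex.I * (Real.sqrt 2 : ℂ)) * (Tmat x n).det := by
    rw [Matrix.det_succ_column_zero, Fin.sum_univ_succ]
    have c0 : ((0:Fin (n+1)).succ : Fin (n+2)).succAbove 0 = 0 := by
      rfl
    have centry : (Tmat x (n+2)).submatrix Fin.succ ((0:Fin (n+1)).succ : Fin (n+2)).succAbove 0 0
        = -(Complex.I * (Real.sqrt 2 : ℂ)) := by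
      rw [submatrix_apply, c0]
      simp [Tmat]
    have ctail : ∀ i : Fin n,
        (Tmat x (n+2)).submatrix Fin.succ ((0:Fin (n+1)).succ : Fin (n+2)).succAbove i.succ 0 = 0 := by
      intro i
      rw [submatrix_apply, c0]
      simp [Tmat, Fin.val_succ]
    have htail2 : (∑ i : Fin n, (-1:ℂ) ^ ((i.succ : Fin (n+1)) : ℕ) *
        (Tmat x (n+2)).submatrix Fin.succ ((0:Fin (n+1)).succ : Fin (n+2)).succAbove i.succ 0 *
        (((Tmat x (n+2)).submatrix Fin.succ ((0:Fin (n+1)).succ : Fin (n+2)).succAbove).submatrix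
          i.succ.succAbove Fin.succ).det) = 0 := by
      apply Finset.sum_eq_zero
      intro i _
      rw [ctail i]; ring
    rw [centry, htail2]
    have hsub : (((Tmat x (n+2)).submatrix Fin.succ ((0:Fin (n+1)).succ : Fin (n+2)).succAbove).submatrix
          (0 : Fin (n+1)).succAbove Fin.succ).det = (Tmat x n).det := by
      rw [Matrix.submatrix_submatrix]
      congr 1
      have hr : (Fin.succ ∘ (0 : Fin (n+1)).succAbove : Fin n → Fin (n+2)) = fun i => i.succ.succ := by
        funext i; simp [Fin.zero_succAbove]
      have hc : (((0:Fin (n+1)).succ : Fin (n+2)).succAbove ∘ Fin.succ : Fin n → Fin (n+2))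
          = fun j => j.succ.succ := by
        funext j
        show ((0:Fin (n+1)).succ : Fin (n+2)).succAbove j.succ = j.succ.succ
        apply Fin.succAbove_of_le_castSucc
        rw [Fin.le_def]
        simp [Fin.val_succ]
      rw [hr, hc, Tmat_shift2]
    rw [hsub]
    norm_num
  rw [hm0, hm1]
  have hsq : (Real.sqrt 2 : ℂ) * (Real.sqrt 2 : ℂ) = 2 := by
    rw [← Complex.ofReal_mul, Real.mul_self_sqrt (by norm_num)]
    norm_num
  have hI : Complex.I * Complex.I = -1 := Complex.I_mul_I
  simp only [Fin.val_zero, Fin.val_succ, pow_zero, pow_one, Fin.val_zero]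
  push_cast
  linear_combination ((Tmat x n).det * (Real.sqrt 2 :ℂ) * (Real.sqrt 2:ℂ)) * hI + ((Tmat x n).det * -1) * hsq



lemma Tmat_det_formula (x : ℂ) (hx : x * x = -1) (n : ℕ) :
    (Tmat x n).det = x ^ n * (jacobsthal (n + 1) : ℂ) := by
  induction n using Nat.twoStepInduction with
  | zero =>
    have : (Tmat x 0).det = 1 := Matrix.det_fin_zero
    rw [this]; norm_num [jacobsthal]
  | one =>
    rw [Matrix.det_fin_one]
    have : Tmat x 1 0 0 = x := by simp [Tmat]
    rw [this]
    norm_num [jacobsthal]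
  | more n ih ih2 =>
    rw [Tmat_det_rec, ih2, ih]
    have hJ : (jacobsthal (n + 2 + 1) : ℂ)
        = (jacobsthal (n + 2) : ℂ) + 2 * (jacobsthal (n + 1) : ℂ) := by
      show ((jacobsthal (n + 3) : ℕ) : ℂ) = _
      rw [show jacobsthal (n+3) = jacobsthal (n+2) + 2 * jacobsthal (n+1) from rfl]
      push_cast; ring
    rw [hJ]
    linear_combination (-2 * (jacobsthal (n + 1) : ℂ) * x ^ n) * hx

noncomputable def Amat (k : ℕ) : Matrix (Fin k) (Fin k) ℂ := fun p q =>
  if (q : ℕ) = p + 1 then Complex.I * (Real.sqrt 2 : ℂ)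
  else if (p : ℕ) = q + 1 then -(Complex.I * (Real.sqrt 2 : ℂ)) else 0

noncomputable def Bmat (k : ℕ) : Matrix (Fin k) (Fin k) ℂ := fun p q =>
  if (p : ℕ) + q + 1 = k then (-1 : ℂ) ^ (p : ℕ) else 0

lemma Bmat_mul_apply (k : ℕ) (M : Matrix (Fin k) (Fin k) ℂ) (p r : Fin k) :
    (Bmat k * M) p r = (-1 : ℂ) ^ (p : ℕ) * M ⟨k - 1 - p, by omega⟩ r := by
  rw [Matrix.mul_apply]
  rw [Finset.sum_eq_single (⟨k - 1 - p, by omega⟩ : Fin k)]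
  · congr 1
    have hp := p.isLt
    simp only [Bmat]
    rw [if_pos (by first | omega | (simp; omega))]
  · intro q _ hq
    have : ¬((p : ℕ) + q + 1 = k) := by
      intro h
      exact hq (Fin.ext (by first | omega | (simp; omega)))
    simp [Bmat, this]
  · simp

lemma mul_Bmat_apply (k : ℕ) (M : Matrix (Fin k) (Fin k) ℂ) (p r : Fin k) :
    (M * Bmat k) p r = M p ⟨k - 1 - r, by omega⟩ * (-1 : ℂ) ^ (k - 1 - (r : ℕ)) := by
  rw [Matrix.mul_apply]
  rw [Finset.sum_eq_single (⟨k - 1 - r, by omega⟩ : Fin k)]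
  · congr 2
    have hr := r.isLt
    simp only [Bmat]
    rw [if_pos (by first | omega | (simp; omega))]
  · intro q _ hq
    have hr := r.isLt
    have : ¬((q : ℕ) + r + 1 = k) := by
      intro h
      exact hq (Fin.ext (by first | omega | (simp; omega)))
    simp [Bmat, this]
  · simp

lemma Bmat_mul_Bmat (k : ℕ) (hk : 1 ≤ k) :
    Bmat k * Bmat k = ((-1 : ℂ) ^ (k + 1)) • (1 : Matrix (Fin k) (Fin k) ℂ) := by
  ext p r
  rw [Bmat_mul_apply]
  have hp := p.isLt
  have hr := r.isLt
  simp only [Bmat, Matrix.smul_apply, Matrix.one_apply, smul_eq_mul]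
  by_cases h : (p : ℕ) = r
  · have hpr : p = r := Fin.ext h
    rw [if_pos (by first | omega | (simp; omega)), if_pos hpr]
    have h1 : (p : ℕ) + (k - 1 - (p : ℕ)) = k - 1 := by omega
    have h2 : k + 1 = (k - 1) + 2 := by omega
    rw [← pow_add]
    rw [h1, h2, pow_add]
    norm_num
  · rw [if_neg (by first | omega | (simp; omega)), if_neg (fun hh => h (by rw [hh]))]
    ring
lemma Amat_mul_Bmat (k : ℕ) (hk : 1 ≤ k) :
    Amat k * Bmat k = Bmat k * Amat k := by
  ext p r
  rw [Bmat_mul_apply, mul_Bmat_apply]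
  have hp := p.isLt
  have hr := r.isLt
  simp only [Amat]
  by_cases h1 : (p : ℕ) + r + 2 = k
  · rw [if_pos (by first | omega | (simp; omega))]
    rw [if_neg (by first | omega | (simp; omega)), if_pos (by first | omega | (simp; omega))]
    have : k - 1 - (r : ℕ) = (p : ℕ) + 1 := by omega
    rw [this, pow_succ]
    ring
  · by_cases h2 : (p : ℕ) + r = k
    · have hp1 : 1 ≤ (p : ℕ) := by omega
      rw [if_neg (by first | omega | (simp; omega)), if_pos (by first | omega | (simp; omega))]
      rw [if_pos (by first | omega | (simp; omega))]
      have : (p : ℕ) = (k - 1 - (r : ℕ)) + 1 := by omega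
      rw [this, pow_succ]
      have h3 : k - 1 - (r : ℕ) ≤ k := by omega
      ring
    · rw [if_neg (by first | omega | (simp; omega)), if_neg (by first | omega | (simp; omega)),
        if_neg (by first | omega | (simp; omega)), if_neg (by first | omega | (simp; omega))]
      ring

lemma abstract_main (k : ℕ) (hk : 1 ≤ k) :
    (Matrix.fromBlocks (Amat k) (Bmat k) (((-1 : ℂ) ^ k) • Bmat k) (Amat k)).det
      = (jacobsthal (k + 1) : ℂ) ^ 2 := by
  set A := Amat k with hAdef
  set B := Bmat k with hBdef
  have hB2 : B * B = ((-1 : ℂ) ^ (k + 1)) • (1 : Matrix (Fin k) (Fin k) ℂ) :=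
    Bmat_mul_Bmat k hk
  have hAB : A * B = B * A := Amat_mul_Bmat k hk
  have hsgn : ((-1 : ℂ) ^ (k + 1)) * ((-1 : ℂ) ^ (k + 1)) = 1 := by
    rw [← pow_add]
    exact Even.neg_one_pow ⟨k + 1, rfl⟩
  letI : Invertible B :=
    ⟨((-1 : ℂ) ^ (k + 1)) • B,
     by rw [Matrix.smul_mul, hB2, smul_smul, hsgn, one_smul],
     by rw [Matrix.mul_smul, hB2, smul_smul, hsgn, one_smul]⟩
  -- the swap matrix
  have hSdet : (Matrix.fromBlocks (0 : Matrix (Fin k) (Fin k) ℂ) (1 : Matrix (Fin k) (Fin k) ℂ) (1 : Matrix (Fin k) (Fin k) ℂ) (0 : Matrix (Fin k) (Fin k) ℂ)).det = (-1 : ℂ) ^ k := by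
    have hdecomp :
        (Matrix.fromBlocks (1 : Matrix (Fin k) (Fin k) ℂ) (1 : Matrix (Fin k) (Fin k) ℂ) (0 : Matrix (Fin k) (Fin k) ℂ) (1 : Matrix (Fin k) (Fin k) ℂ))
          * (Matrix.fromBlocks (1 : Matrix (Fin k) (Fin k) ℂ) (0 : Matrix (Fin k) (Fin k) ℂ) (-(1 : Matrix (Fin k) (Fin k) ℂ)) (1 : Matrix (Fin k) (Fin k) ℂ))
          * (Matrix.fromBlocks (1 : Matrix (Fin k) (Fin k) ℂ) (1 : Matrix (Fin k) (Fin k) ℂ) (0 : Matrix (Fin k) (Fin k) ℂ) (1 : Matrix (Fin k) (Fin k) ℂ))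
          * (Matrix.fromBlocks (-(1 : Matrix (Fin k) (Fin k) ℂ)) (0 : Matrix (Fin k) (Fin k) ℂ) (0 : Matrix (Fin k) (Fin k) ℂ) (1 : Matrix (Fin k) (Fin k) ℂ))
        = Matrix.fromBlocks (0 : Matrix (Fin k) (Fin k) ℂ) (1 : Matrix (Fin k) (Fin k) ℂ) (1 : Matrix (Fin k) (Fin k) ℂ) (0 : Matrix (Fin k) (Fin k) ℂ) := by
      simp [Matrix.fromBlocks_multiply]
    rw [← hdecomp]
    simp only [Matrix.det_mul, Matrix.det_fromBlocks_zero₂₁, Matrix.det_fromBlocks_zero₁₂,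
      Matrix.det_one, one_mul, mul_one]
    simp [Matrix.det_neg]
  have hFS :
      (Matrix.fromBlocks A B (((-1 : ℂ) ^ k) • B) A)
        * (Matrix.fromBlocks (0 : Matrix (Fin k) (Fin k) ℂ) (1 : Matrix (Fin k) (Fin k) ℂ) (1 : Matrix (Fin k) (Fin k) ℂ) (0 : Matrix (Fin k) (Fin k) ℂ))
      = Matrix.fromBlocks B A A (((-1 : ℂ) ^ k) • B) := by
    simp [Matrix.fromBlocks_multiply]
  have hdetFS := congrArg Matrix.det hFS
  rw [Matrix.det_mul, hSdet] at hdetFS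
  rw [Matrix.det_fromBlocks₁₁ B A A (((-1 : ℂ) ^ k) • B)] at hdetFS
  have hinv : (⅟B : Matrix (Fin k) (Fin k) ℂ) = ((-1 : ℂ) ^ (k + 1)) • B := rfl
  have hschur : ((-1 : ℂ) ^ k) • B - A * ⅟B * A
      = ((-1 : ℂ) ^ k) • (B * (1 + A * A)) := by
    rw [hinv, Matrix.mul_smul, Matrix.smul_mul, hAB, Matrix.mul_assoc]
    rw [Matrix.mul_add, Matrix.mul_one, smul_add]
    rw [pow_succ, mul_neg_one, neg_smul, sub_neg_eq_add]
  rw [hschur, Matrix.det_smul, Matrix.det_mul] at hdetFS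
  have hdetBB : (B.det) * (B.det) = ((-1 : ℂ) ^ (k + 1)) ^ k := by
    have := congrArg Matrix.det hB2
    rw [Matrix.det_mul, Matrix.det_smul, Matrix.det_one, mul_one] at this
    simpa using this
  have hk2 : ((-1 : ℂ) ^ k) * ((-1 : ℂ) ^ k) = 1 := by
    rw [← pow_add]; exact Even.neg_one_pow ⟨k, rfl⟩
  have hdetF : (Matrix.fromBlocks A B (((-1 : ℂ) ^ k) • B) A).det
      = (1 + A * A).det := by
    have step : (Matrix.fromBlocks A B (((-1 : ℂ) ^ k) • B) A).det
        = (-1 : ℂ) ^ k * (B.det * (((-1 : ℂ) ^ k) ^ Fintype.card (Fin k)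
            * (B.det * (1 + A * A).det))) := by
      calc (Matrix.fromBlocks A B (((-1 : ℂ) ^ k) • B) A).det
          = (Matrix.fromBlocks A B (((-1 : ℂ) ^ k) • B) A).det
              * ((-1 : ℂ) ^ k * (-1 : ℂ) ^ k) := by rw [hk2, mul_one]
        _ = ((Matrix.fromBlocks A B (((-1 : ℂ) ^ k) • B) A).det * (-1 : ℂ) ^ k)
              * (-1 : ℂ) ^ k := by ring
        _ = _ := by rw [hdetFS]; ring
    rw [step]
    simp only [Fintype.card_fin]
    rw [← pow_mul]
    have : (-1 : ℂ) ^ k * (B.det * ((-1 : ℂ) ^ (k * k) * (B.det * (1 + A * A).det)))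
        = ((-1 : ℂ) ^ k * (-1 : ℂ) ^ (k * k)) * ((B.det * B.det) * (1 + A * A).det) := by
      ring
    rw [this, hdetBB, ← pow_add, ← pow_mul]
    have e1 : (-1 : ℂ) ^ (k + k * k) = 1 := by
      apply Even.neg_one_pow
      have h : k + k * k = k * (k + 1) := by ring
      rw [h]; exact Nat.even_mul_succ_self k
    have e2 : (-1 : ℂ) ^ ((k + 1) * k) = 1 := by
      apply Even.neg_one_pow
      have h : (k + 1) * k = k * (k + 1) := by ring
      rw [h]; exact Nat.even_mul_succ_self k
    rw [e1, e2, one_mul, one_mul]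
  rw [hdetF]
  have hT : ∀ x : ℂ, Tmat x k = A + x • (1 : Matrix (Fin k) (Fin k) ℂ) := by
    intro x
    ext p q
    simp only [Tmat, hAdef, Amat, Matrix.add_apply, Matrix.smul_apply, Matrix.one_apply,
      smul_eq_mul]
    by_cases h1 : (q : ℕ) = (p : ℕ) + 1
    · rw [if_pos h1, if_pos h1, if_neg (show ¬ p = q from fun h => by rw [h] at h1; omega)]
      ring
    · rw [if_neg h1, if_neg h1]
      by_cases h2 : (p : ℕ) = (q : ℕ) + 1
      · rw [if_pos h2, if_pos h2, if_neg (show ¬ p = q from fun h => by rw [h] at h2; omega)]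
        ring
      · rw [if_neg h2, if_neg h2]
        by_cases h3 : (p : ℕ) = (q : ℕ)
        · rw [if_pos h3, if_pos (Fin.ext h3)]
          ring
        · rw [if_neg h3, if_neg (show ¬ p = q from fun h => h3 (by rw [h]))]
          ring
  have hfact : (1 : Matrix (Fin k) (Fin k) ℂ) + A * A
      = Tmat Complex.I k * Tmat (-Complex.I) k := by
    rw [hT, hT]
    have expand : (A + Complex.I • (1 : Matrix (Fin k) (Fin k) ℂ))
        * (A + (-Complex.I) • (1 : Matrix (Fin k) (Fin k) ℂ))
        = A * A + (-Complex.I) • A + Complex.I • A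
            + (Complex.I * -Complex.I) • (1 : Matrix (Fin k) (Fin k) ℂ) := by
      rw [Matrix.add_mul, Matrix.mul_add, Matrix.mul_add, Matrix.smul_mul, Matrix.smul_mul,
        Matrix.mul_smul, Matrix.mul_smul, Matrix.mul_one, Matrix.one_mul, smul_smul,
        Matrix.one_mul]
      abel
    have hone : Complex.I * -Complex.I = 1 := by
      rw [mul_neg, Complex.I_mul_I, neg_neg]
    rw [expand, hone, one_smul, neg_smul]
    abel
  have hxI : Complex.I * Complex.I = -1 := Complex.I_mul_I
  have hxnI : (-Complex.I) * (-Complex.I) = -1 := by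
    rw [neg_mul_neg, Complex.I_mul_I]
  rw [hfact, Matrix.det_mul, Tmat_det_formula _ hxI, Tmat_det_formula _ hxnI]
  have hpow : Complex.I ^ k * (-Complex.I) ^ k = 1 := by
    rw [← mul_pow, mul_neg, Complex.I_mul_I, neg_neg, one_pow]
  linear_combination ((jacobsthal (k + 1) : ℂ) ^ 2) * hpow

/-- With `a = i√2`, `b = 1`: for all `k ≥ 1`, the determinant of the `2k × 2k` matrix
`F_{2k} = [[A_k, B_k], [(-1)^k B_k, A_k]]` equals `J(k+1)²`, the square of the
`(k+1)`-st Jacobsthal number. -/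
theorem stmt16 (k : ℕ) (hk : 1 ≤ k)
    (A B : Matrix (Fin k) (Fin k) ℂ)
    (hA : ∀ p q : Fin k, A p q =
      if q.1 = p.1 + 1 then Complex.I * (Real.sqrt 2 : ℂ)
      else if p.1 = q.1 + 1 then -(Complex.I * (Real.sqrt 2 : ℂ)) else 0)
    (hB : ∀ p q : Fin k, B p q =
      if p.1 + q.1 + 1 = k then (-1 : ℂ) ^ p.1 * 1 else 0) :
    (Matrix.fromBlocks A B (((-1 : ℂ) ^ k) • B) A).det
      = (jacobsthal (k + 1) : ℂ) ^ 2 := by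
  have hAeq : A = Amat k := by
    ext p q; rw [hA p q]; rfl
  have hBeq : B = Bmat k := by
    ext p q; rw [hB p q]; simp [Bmat]
  rw [hAeq, hBeq]
  exact abstract_main k hk
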